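/- Let (S,+) be a commutative semigroup and A ⊆ S piecewise syndetic. Then for any p ∈ K(βS) with A ∈ p, the set B = {x ∈ S : -x+A ∈ p} is syndetic in S. -/
import Mathlib


attribute [local instance] Ultrafilter.add

/-- `A` is piecewise syndetic in the commutative semigroup `(S,+)`. -/
def PiecewiseSyndetic {S : Type*} [AddCommSemigroup S] (A : Set S) : Prop :=
  ∃ G : Finset S, ∀ F : Finset S, ∃ x : S, ∀ f ∈ F, ∃ t ∈ G, t + (f + x) ∈ A

/-- `B` is syndetic in `(S,+)`. -/
def SyndeticSet {S : Type*} [AddCommSemigroup S] (B : Set S) : Prop :=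
  ∃ F : Finset S, ∀ s : S, ∃ t ∈ F, t + s ∈ B

/-- `I` is a two-sided ideal of `βS = Ultrafilter S`. -/
def IsIdealUF {S : Type*} [AddCommSemigroup S] (I : Set (Ultrafilter S)) : Prop :=
  I.Nonempty ∧ ∀ p ∈ I, ∀ q : Ultrafilter S, q + p ∈ I ∧ p + q ∈ I

section Aux

variable {S : Type*} [AddCommSemigroup S]

lemma uf_mem_add (U V : Ultrafilter S) (s : Set S) :
    s ∈ U + V ↔ {m | {n | m + n ∈ s} ∈ V} ∈ U := Iff.rfl

lemma uf_add_assoc (a b c : Ultrafilter S) : a + b + c = a + (b + c) :=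
  Ultrafilter.coe_inj.mp <| Filter.ext' fun pp => by
    simp [Ultrafilter.eventually_add, add_assoc]

/-- A left ideal of `βS`. -/
def LeftIdealUF (L : Set (Ultrafilter S)) : Prop :=
  L.Nonempty ∧ ∀ r : Ultrafilter S, ∀ x ∈ L, r + x ∈ L

/-- A minimal left ideal of `βS`. -/
def MinLeftIdealUF (L : Set (Ultrafilter S)) : Prop :=
  LeftIdealUF L ∧ ∀ L', LeftIdealUF L' → L' ⊆ L → L' = L

lemma range_add_left_leftIdeal (x : Ultrafilter S) :
    LeftIdealUF (Set.range (fun r : Ultrafilter S => r + x)) := by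
  constructor
  · exact ⟨x + x, x, rfl⟩
  · rintro r y ⟨s, rfl⟩
    exact ⟨r + s, show r + s + x = r + (s + x) from uf_add_assoc r s x⟩

lemma range_add_left_closed (x : Ultrafilter S) :
    IsClosed (Set.range (fun r : Ultrafilter S => r + x)) :=
  (isCompact_range (Ultrafilter.continuous_add_left x)).isClosed

/-- Every closed left ideal contains a minimal left ideal. -/
lemma exists_minLeftIdeal_subset {L₀ : Set (Ultrafilter S)} (h0 : IsClosed L₀)
    (hL0 : LeftIdealUF L₀) : ∃ L ⊆ L₀, MinLeftIdealUF L := by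
  have hchainLB : ∀ c ⊆ {L : Set (Ultrafilter S) | IsClosed L ∧ LeftIdealUF L},
      IsChain (· ⊆ ·) c → c.Nonempty →
      ∃ lb ∈ {L : Set (Ultrafilter S) | IsClosed L ∧ LeftIdealUF L}, ∀ s ∈ c, lb ⊆ s := by
    intro c hc𝒮 hchain hcne
    have hne : (⋂₀ c).Nonempty := by
      have : Nonempty c := hcne.to_subtype
      apply IsCompact.nonempty_sInter_of_directed_nonempty_isCompact_isClosed
      · intro U hU V hV
        rcases hchain.total hU hV with h | h
        · exact ⟨U, hU, le_refl _, h⟩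
        · exact ⟨V, hV, h, le_refl _⟩
      · exact fun U hU => (hc𝒮 hU).2.1
      · exact fun U hU => (hc𝒮 hU).1.isCompact
      · exact fun U hU => (hc𝒮 hU).1
    refine ⟨⋂₀ c, ⟨isClosed_sInter fun U hU => (hc𝒮 hU).1, hne, ?_⟩,
      fun s hs => Set.sInter_subset_of_mem hs⟩
    intro r y hy
    exact fun U hU => (hc𝒮 hU).2.2 r y (hy U hU)
  obtain ⟨m, hm0, hmmin⟩ := zorn_superset_nonempty
    {L : Set (Ultrafilter S) | IsClosed L ∧ LeftIdealUF L} hchainLB L₀ ⟨h0, hL0⟩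
  refine ⟨m, hm0, hmmin.prop.2, ?_⟩
  -- minimal among all left ideals
  intro L' hL' hsub
  obtain ⟨x, hx⟩ := hL'.1
  have hJsub : Set.range (fun r : Ultrafilter S => r + x) ⊆ L' := by
    rintro y ⟨r, rfl⟩; exact hL'.2 r x hx
  have hJ𝒮 : Set.range (fun r : Ultrafilter S => r + x) ∈
      {L : Set (Ultrafilter S) | IsClosed L ∧ LeftIdealUF L} :=
    ⟨range_add_left_closed x, range_add_left_leftIdeal x⟩
  have : m ⊆ Set.range (fun r : Ultrafilter S => r + x) :=
    hmmin.2 hJ𝒮 (hJsub.trans hsub)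
  exact le_antisymm hsub (this.trans hJsub)

/-- A right translate of a minimal left ideal is a minimal left ideal. -/
lemma minLeftIdeal_shift {L : Set (Ultrafilter S)} (hL : MinLeftIdealUF L)
    (s : Ultrafilter S) : MinLeftIdealUF ((fun l => l + s) '' L) := by
  obtain ⟨⟨⟨x, hx⟩, hLl⟩, hLmin⟩ := hL
  constructor
  · constructor
    · exact ⟨x + s, x, hx, rfl⟩
    · rintro r y ⟨l, hl, rfl⟩
      exact ⟨r + l, hLl r l hl, show r + l + s = r + (l + s) from uf_add_assoc r l s⟩
  · intro L' hL' hsub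
    set M : Set (Ultrafilter S) := {m ∈ L | m + s ∈ L'} with hM
    have hMI : LeftIdealUF M := by
      constructor
      · obtain ⟨y, hy⟩ := hL'.1
        obtain ⟨l, hl, rfl⟩ := hsub hy
        exact ⟨l, hl, hy⟩
      · rintro r y ⟨hyL, hyL'⟩
        refine ⟨hLl r y hyL, ?_⟩
        rw [uf_add_assoc]
        exact hL'.2 r _ hyL'
    have hML : M = L := hLmin M hMI fun y hy => hy.1
    apply le_antisymm hsub
    rintro y ⟨l, hl, rfl⟩
    have : l ∈ M := hML ▸ hl
    exact this.2

end Aux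

/-- If `A` is piecewise syndetic and `p ∈ K(βS)` contains `A`, then
`{x : -x+A ∈ p}` is syndetic. -/
theorem stmt_4 {S : Type*} [AddCommSemigroup S] (A : Set S)
    (hA : PiecewiseSyndetic A)
    (K : Set (Ultrafilter S)) (hK : IsIdealUF K)
    (hKmin : ∀ I : Set (Ultrafilter S), IsIdealUF I → K ⊆ I)
    (p : Ultrafilter S) (hp : p ∈ K) (hAp : A ∈ p) :
    SyndeticSet {x : S | {y : S | x + y ∈ A} ∈ p} := by
  classical
  haveI : Nonempty S := Filter.nonempty_of_neBot (p : Filter S)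
  set B : Set S := {x : S | {y : S | x + y ∈ A} ∈ p} with hB
  by_contra hsyn
  rw [SyndeticSet] at hsyn
  push_neg at hsyn
  -- build an ultrafilter q containing the complement of every translate of B
  set C : S → Set S := fun t => {s | t + s ∉ B} with hC
  set f : Filter S := ⨅ F : Finset S, Filter.principal (⋂ t ∈ F, C t) with hf
  have hdir : Directed (· ≥ ·) fun F : Finset S => Filter.principal (⋂ t ∈ F, C t) := by
    intro F G
    refine ⟨F ∪ G, Filter.principal_mono.2 ?_, Filter.principal_mono.2 ?_⟩ <;>
      · intro s hs
        simp only [Set.mem_iInter] at hs ⊢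
        intro t ht
        exact hs t (by simp [Finset.mem_union, ht])
  have hne : ∀ F : Finset S, (⋂ t ∈ F, C t).Nonempty := by
    intro F
    obtain ⟨s, hs⟩ := hsyn F
    refine ⟨s, ?_⟩
    simp only [Set.mem_iInter]
    intro t ht
    exact hs t ht
  haveI hfne : f.NeBot := by
    rw [hf]
    exact Filter.iInf_neBot_of_directed hdir fun F =>
      Filter.principal_neBot_iff.2 (hne F)
  obtain ⟨q, hq⟩ := Ultrafilter.exists_le f
  have hCq : ∀ t : S, C t ∈ q := by
    intro t
    have h1 : (q : Filter S) ≤ Filter.principal (⋂ x ∈ ({t} : Finset S), C x) :=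
      hq.trans (iInf_le _ ({t} : Finset S))
    have := Filter.le_principal_iff.1 h1
    simpa using this
  -- p belongs to some minimal left ideal L
  obtain ⟨L₀, hL₀sub, hL₀⟩ := exists_minLeftIdeal_subset (range_add_left_closed p)
    (range_add_left_leftIdeal p)
  set M : Set (Ultrafilter S) := {r | ∃ L, MinLeftIdealUF L ∧ r ∈ L} with hM
  have hMideal : IsIdealUF M := by
    constructor
    · obtain ⟨x, hx⟩ := hL₀.1.1
      exact ⟨x, L₀, hL₀, hx⟩
    · rintro r ⟨L, hL, hrL⟩ s
      constructor
      · exact ⟨L, hL, hL.1.2 s r hrL⟩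
      · exact ⟨(fun l => l + s) '' L, minLeftIdeal_shift hL s, r, hrL, rfl⟩
  obtain ⟨L, hL, hpL⟩ := hKmin M hMideal hp
  -- q + p ∈ L, and the left ideal βS + (q+p) inside L must equal L
  have hqpL : q + p ∈ L := hL.1.2 q p hpL
  have hJL : Set.range (fun r : Ultrafilter S => r + (q + p)) = L := by
    apply hL.2 _ (range_add_left_leftIdeal (q + p))
    rintro y ⟨r, rfl⟩
    exact hL.1.2 r _ hqpL
  obtain ⟨r, hr⟩ : ∃ r : Ultrafilter S, r + (q + p) = p := by
    have := hJL ▸ hpL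
    exact this
  -- final contradiction: A ∈ r + (q + p) is impossible
  have hArqp : A ∈ r + (q + p) := by rw [hr]; exact hAp
  rw [uf_mem_add] at hArqp
  have hempty : {m : S | {n : S | m + n ∈ A} ∈ q + p} = ∅ := by
    ext x
    simp only [Set.mem_setOf_eq, Set.mem_empty_iff_false, iff_false]
    intro hx
    rw [uf_mem_add] at hx
    have hsub : {m : S | {n : S | m + n ∈ {n : S | x + n ∈ A}} ∈ p} ⊆ (C x)ᶜ := by
      intro m hm
      simp only [Set.mem_setOf_eq] at hm
      simp only [hC, Set.mem_compl_iff, Set.mem_setOf_eq, not_not]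
      rw [hB]
      simp only [Set.mem_setOf_eq]
      convert hm using 1
      ext n
      simp only [Set.mem_setOf_eq]
      rw [add_assoc]
    have hcompl : (C x)ᶜ ∈ q := Filter.mem_of_superset hx hsub
    exact (Ultrafilter.compl_mem_iff_notMem.1 hcompl) (hCq x)
  rw [hempty] at hArqp
  exact Ultrafilter.empty_notMem hArqp
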